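/- Let F be a field with q elements and k ≥ 3, and let G be the k-uniform hypergraph on the normalized vectors of F^k with edges the linearly independent k-sets. Define C:F^k→F^n (n=(q^k−1)/(q−1)) by C_x(m) = ⟨x,m⟩ for each normalized vector x. Then for every edge e of G, the map m ↦ (C_x(m))_{x∈e} is injective, so q_lin(G) ≤ q while χ(G) = (q^k−1)/(q−1). -/

import Mathlib

/-- A vector in F^k is normalized if its leading nonzero entry equals 1. -/
def Normalized {k : ℕ} {F : Type} [Field F] (x : Fin k → F) : Prop :=
  ∃ i : Fin k, x i = 1 ∧ ∀ j : Fin k, j < i → x j = 0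

/-! An edge is a basis of `F^k`, so a message is determined by its dot products with the vectors
of an edge. Normalized vectors are representatives of the points of `ℙ(F^k)`, of which there are
`(q^k - 1)/(q - 1)`. Two distinct normalized vectors are linearly independent; extending them to
a basis and renormalizing its vectors yields an edge containing both. So a colouring injective on
every edge is injective, and the chromatic number is the number of vertices. -/

open Module Matrix Projectivization Set
open scoped LinearAlgebra.Projectivization

theorem Matrix.dotProduct_injective_of_span_eq_top {ι n R : Type*} [CommSemiring R] [Fintype n]
    {v : ι → n → R} (hv : Submodule.span R (range v) = ⊤) :
    Function.Injective fun m i => v i ⬝ᵥ m := by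
  intro m₁ m₂ h
  have hext : (dotProductBilin R R).flip m₁ = (dotProductBilin R R).flip m₂ :=
    LinearMap.ext_on_range hv fun i => congrFun h i
  refine dotProduct_eq _ _ fun u => ?_
  simpa [dotProduct_comm] using LinearMap.congr_fun hext u

theorem sInf_injOn_edges_colorings_eq_card {V : Type*} [Finite V] (E : Finset V → Prop)
    (hE : ∀ x y, x ≠ y → ∃ s, E s ∧ x ∈ s ∧ y ∈ s) :
    sInf {c : ℕ | ∃ g : V → Fin c, ∀ s, E s → InjOn g ↑s} = Nat.card V := by
  have hmem : Nat.card V ∈ {c : ℕ | ∃ g : V → Fin c, ∀ s, E s → InjOn g ↑s} :=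
    ⟨Finite.equivFin V, fun _ _ => (Finite.equivFin V).injective.injOn⟩
  refine le_antisymm (Nat.sInf_le hmem) (le_csInf ⟨_, hmem⟩ ?_)
  rintro c ⟨g, hg⟩
  have hg_inj : Function.Injective g := by
    intro x y hxy
    by_contra hne
    obtain ⟨s, hs, hx, hy⟩ := hE x y hne
    exact hne (hg s hs hx hy hxy)
  simpa using Nat.card_le_card_of_injective g hg_inj

section Normalized

variable {k : ℕ} {F : Type} [Field F]

theorem Normalized.ne_zero {x : Fin k → F} (hx : Normalized x) : x ≠ 0 := by
  obtain ⟨i, hi, -⟩ := hx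
  rintro rfl
  exact zero_ne_one hi

theorem Normalized.eq_one_of_smul {x : Fin k → F} {a : F} (hx : Normalized x)
    (hax : Normalized (a • x)) : a = 1 := by
  obtain ⟨i, hi, hi0⟩ := hx
  obtain ⟨j, hj, hj0⟩ := hax
  rcases lt_trichotomy i j with hij | rfl | hji
  · have ha : a = 0 := by simpa [hi] using hj0 i hij
    simp [ha] at hj
  · simpa [hi] using hj
  · simp [hi0 j hji] at hj

theorem Normalized.eq_of_smul_eq {x y : Fin k → F} {a : F} (hx : Normalized x)
    (hy : Normalized y) (h : a • x = y) : x = y := by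
  rw [← h, hx.eq_one_of_smul (a := a) (by rwa [h]), one_smul]

theorem exists_smul_normalized {v : Fin k → F} (hv : v ≠ 0) :
    ∃ a : Fˣ, Normalized (a • v) := by
  obtain ⟨j, hj⟩ := Function.ne_iff.1 hv
  obtain ⟨i, hi : v i ≠ 0, hmin⟩ := wellFounded_lt.has_min {i | v i ≠ 0} ⟨j, hj⟩
  refine ⟨Units.mk0 (v i)⁻¹ (inv_ne_zero hi), i, by simp [Units.smul_def, hi],
    fun l hl => ?_⟩
  simp [not_not.1 fun hl0 => hmin l hl0 hl]

variable (k F) in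
noncomputable def normalizedEquivProjectivization :
    {x : Fin k → F // Normalized x} ≃ ℙ F (Fin k → F) :=
  Equiv.ofBijective (fun x => mk F x.1 x.2.ne_zero) <| by
    refine ⟨fun x y hxy => ?_, Projectivization.ind fun v hv => ?_⟩
    · obtain ⟨a, ha⟩ := (mk_eq_mk_iff F _ _ _ _).1 hxy
      exact Subtype.ext (y.2.eq_of_smul_eq x.2 ha).symm
    · obtain ⟨a, ha⟩ := exists_smul_normalized hv
      exact ⟨⟨_, ha⟩, (mk_eq_mk_iff F _ _ _ _).2 ⟨a, rfl⟩⟩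

theorem card_normalized [Fintype F] :
    Nat.card {x : Fin k → F // Normalized x} =
      (Fintype.card F ^ k - 1) / (Fintype.card F - 1) := by
  rw [Nat.card_congr (normalizedEquivProjectivization k F), Projectivization.card'']
  simp

theorem exists_finset_normalized_of_basis {ι : Type*} [Finite ι] (b : Basis ι F (Fin k → F)) :
    ∃ s : Finset {x : Fin k → F // Normalized x}, s.card = k ∧
      LinearIndependent F (fun x : s => x.val.val) ∧
      ∀ x : {x : Fin k → F // Normalized x}, x.val ∈ range b → x ∈ s := by
  classical
  have := Fintype.ofFinite ι
  choose a ha using fun i => exists_smul_normalized (b.ne_zero i)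
  let f : ι → {x : Fin k → F // Normalized x} := fun i => ⟨a i • b i, ha i⟩
  have hli : LinearIndependent F fun i => (f i).val := b.linearIndependent.units_smul a
  have hf : Function.Injective f := fun i j hij => hli.injective (congrArg Subtype.val hij)
  refine ⟨Finset.univ.image f, ?_, ?_, ?_⟩
  · rw [Finset.card_image_of_injective _ hf, Finset.card_univ, ← finrank_eq_card_basis b,
      finrank_fin_fun]
  · change LinearIndepOn F Subtype.val
      (↑(Finset.univ.image f) : Set {x : Fin k → F // Normalized x})
    rw [Finset.coe_image, Finset.coe_univ, image_univ]
    exact (linearIndepOn_range_iff hf Subtype.val).2 hli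
  · rintro x ⟨i, hi⟩
    have hbi : Normalized (b i) := hi ▸ x.2
    refine Finset.mem_image.2 ⟨i, Finset.mem_univ _, Subtype.ext ?_⟩
    rw [← hi]
    exact (hbi.eq_of_smul_eq (f i).2 (Units.smul_def (a i) (b i)).symm).symm

theorem exists_finset_normalized_mem_of_ne {x y : {x : Fin k → F // Normalized x}}
    (hxy : x ≠ y) :
    ∃ s : Finset {x : Fin k → F // Normalized x}, s.card = k ∧
      LinearIndependent F (fun x : s => x.val.val) ∧ x ∈ s ∧ y ∈ s := by
  have hpair : LinearIndepOn F id {x.val, y.val} :=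
    linearIndepOn_id_pair x.2.ne_zero fun a h => hxy (Subtype.ext (x.2.eq_of_smul_eq y.2 h))
  obtain ⟨s, hcard, hli, hmem⟩ := exists_finset_normalized_of_basis (Basis.extend hpair)
  have hsub : {x.val, y.val} ⊆ range (Basis.extend hpair) :=
    (Basis.range_extend hpair).symm ▸ hpair.subset_extend (subset_univ _)
  exact ⟨s, hcard, hli, hmem x (hsub (by simp)), hmem y (hsub (by simp))⟩

end Normalized

theorem stmt6_general (F : Type) [Field F] [Fintype F] (q k : ℕ)
    (hF : Fintype.card F = q) :
    (∀ s : Finset {x : Fin k → F // Normalized x}, s.card = k →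
      LinearIndependent F (fun x : s => (x.val.val : Fin k → F)) →
        Function.Injective
          (fun (m : Fin k → F) => fun x : s => ∑ ℓ : Fin k, x.val.val ℓ * m ℓ)) ∧
    sInf {c : ℕ | ∃ g : {x : Fin k → F // Normalized x} → Fin c,
        ∀ s : Finset {x : Fin k → F // Normalized x}, s.card = k →
          LinearIndependent F (fun x : s => (x.val.val : Fin k → F)) →
            Set.InjOn g ↑s} = (q ^ k - 1) / (q - 1) := by
  refine ⟨fun s hcard hli => dotProduct_injective_of_span_eq_top
    (hli.span_eq_top_of_card_eq_finrank' (by simpa using hcard)), ?_⟩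
  rw [← hF, ← card_normalized]
  have := sInf_injOn_edges_colorings_eq_card
    (fun s : Finset {x : Fin k → F // Normalized x} =>
      s.card = k ∧ LinearIndependent F (fun x : s => (x.val.val : Fin k → F)))
    fun x y hxy => by
      obtain ⟨s, hcard, hli, hx, hy⟩ := exists_finset_normalized_mem_of_ne hxy
      exact ⟨s, ⟨hcard, hli⟩, hx, hy⟩
  simpa only [and_imp] using this

/-- For a field F with q elements and k ≥ 3, consider the k-uniform hypergraph G
on the normalized vectors of F^k with edges the linearly independent k-sets, and the linear
encoding C with C_x(m) = ⟨x,m⟩.  Then for every edge e, the map m ↦ (C_x(m))_{x∈e} is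
injective (so there is a linear erasure code for G over F, i.e. q_lin(G) ≤ q), while
χ(G) = (q^k-1)/(q-1). -/
theorem stmt6 (F : Type) [Field F] [Fintype F] (q k : ℕ)
    (hF : Fintype.card F = q) (hk : 3 ≤ k) :
    (∀ s : Finset {x : Fin k → F // Normalized x}, s.card = k →
      LinearIndependent F (fun x : s => (x.val.val : Fin k → F)) →
        Function.Injective
          (fun (m : Fin k → F) => fun x : s => ∑ ℓ : Fin k, x.val.val ℓ * m ℓ)) ∧
    sInf {c : ℕ | ∃ g : {x : Fin k → F // Normalized x} → Fin c,
        ∀ s : Finset {x : Fin k → F // Normalized x}, s.card = k →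
          LinearIndependent F (fun x : s => (x.val.val : Fin k → F)) →
            Set.InjOn g ↑s} = (q ^ k - 1) / (q - 1) :=
  stmt6_general F q k hF
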